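/- arXiv:2411.03683 — 2 statements merged into one kernel-verified Lean document; each statement's English description precedes it below -/
import Mathlib

section
/- (Transitive rule for circuit reducibility.) Suppose (C, {p_i}) is δ-reducible to (C', {q_j}) and (C', {q_j}) is δ'-reducible to (C'', {r_k}), where δ, δ' ≥ 0 and δ + δ' ≤ 1. Then (C, {p_i}) is (δ+δ')-reducible to (C'', {r_k}). -/
open scoped Classical

/-- Probability that a random subset (given by a probability mass function `μ` on `Finset ι`)
satisfies the event `E`. -/
noncomputable def prob {ι : Type*} [Fintype ι] (μ : Finset ι → ℝ) (E : Finset ι → Prop) : ℝ :=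
  ∑ F : Finset ι, if E F then μ F else 0

/-- `μ` is a probability mass function on subsets of the finite set of locations `ι`. -/
def IsPMF {ι : Type*} [Fintype ι] (μ : Finset ι → ℝ) : Prop :=
  (∀ F, 0 ≤ μ F) ∧ ∑ F : Finset ι, μ F = 1

/-- The random fault set distributed according to `μ` is local stochastic with error
parameters `p`: for every `A`, `ℙ[F ⊇ A] ≤ ∏_{i∈A} p_i` (the empty product is `1`). -/
def LocalStochastic {ι : Type*} [Fintype ι] (p : ι → ℝ) (μ : Finset ι → ℝ) : Prop :=
  ∀ A : Finset ι, prob μ (fun F => A ⊆ F) ≤ ∏ i ∈ A, p i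

/-- `(Γ, m)` witnesses δ-reducibility of `(C, p)` to `(C', q)`: for every local stochastic
random fault set `F` with parameters `p`, (a) `ℙ[m(F) = 0] ≥ 1 − δ` and
(b) `ℙ[m(F) = 0 and Γ(F) ⊇ A'] ≤ ∏_{j∈A'} q_j` for every `A'`. -/
def Witnesses {ι ι' : Type*} [Fintype ι] [Fintype ι'] (p : ι → ℝ) (q : ι' → ℝ) (δ : ℝ)
    (Γ : Finset ι → Finset ι') (m : Finset ι → Bool) : Prop :=
  ∀ μ : Finset ι → ℝ, IsPMF μ → LocalStochastic p μ →
    (1 - δ ≤ prob μ (fun F => m F = false)) ∧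
    (∀ A' : Finset ι',
      prob μ (fun F => m F = false ∧ A' ⊆ Γ F) ≤ ∏ j ∈ A', q j)

/-- `(C, p)` is δ-reducible to `(C', q)` (the probabilistic conditions of the definition
of circuit reducibility; the semantic condition on Pauli error assignments is abstracted
away). -/
def Reducible {ι ι' : Type*} [Fintype ι] [Fintype ι'] (p : ι → ℝ) (q : ι' → ℝ)
    (δ : ℝ) : Prop :=
  ∃ (Γ : Finset ι → Finset ι') (m : Finset ι → Bool), Witnesses p q δ Γ m


section Aux
variable {ι : Type*} [Fintype ι]

lemma prob_congr (μ : Finset ι → ℝ) {E E' : Finset ι → Prop}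
    (h : ∀ F, E F ↔ E' F) : prob μ E = prob μ E' :=
  Finset.sum_congr rfl fun F _ => by rw [if_congr (h F) rfl rfl]

lemma prob_nonneg' {μ : Finset ι → ℝ} (hμ : ∀ F, 0 ≤ μ F)
    (E : Finset ι → Prop) : 0 ≤ prob μ E :=
  Finset.sum_nonneg fun F _ => by split_ifs <;> simp [hμ F]

lemma prob_mono {μ : Finset ι → ℝ} (hμ : ∀ F, 0 ≤ μ F)
    {E E' : Finset ι → Prop} (h : ∀ F, E F → E' F) : prob μ E ≤ prob μ E' := by
  refine Finset.sum_le_sum fun F _ => ?_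
  split_ifs with h1 h2
  · exact le_rfl
  · exact absurd (h F h1) h2
  · exact hμ F
  · exact le_rfl

lemma prob_le_one {μ : Finset ι → ℝ} (hμ : IsPMF μ) (E : Finset ι → Prop) :
    prob μ E ≤ 1 := by
  calc prob μ E ≤ ∑ F : Finset ι, μ F :=
        Finset.sum_le_sum fun F _ => by split_ifs <;> simp [hμ.1 F]
    _ = 1 := hμ.2

end Aux

/-- Transitive rule for circuit reducibility: δ-reducibility of `(C,p)` to `(C',q)` followed
by δ'-reducibility of `(C',q)` to `(C'',r)` gives (δ+δ')-reducibility of `(C,p)` to `(C'',r)`,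
provided `δ, δ' ≥ 0` and `δ + δ' ≤ 1`. -/
theorem reducible_trans {ι ι' ι'' : Type*} [Fintype ι] [Fintype ι'] [Fintype ι'']
    (p : ι → ℝ) (q : ι' → ℝ) (r : ι'' → ℝ)
    (hp : ∀ i, 0 ≤ p i ∧ p i ≤ 1) (hq : ∀ j, 0 ≤ q j ∧ q j ≤ 1)
    (hr : ∀ k, 0 ≤ r k ∧ r k ≤ 1)
    (δ δ' : ℝ) (hδ : 0 ≤ δ) (hδ' : 0 ≤ δ') (hsum : δ + δ' ≤ 1)
    (h₁ : Reducible p q δ) (h₂ : Reducible q r δ') :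
    Reducible p r (δ + δ') := by
  obtain ⟨Γ₁, m₁, hw₁⟩ := h₁
  obtain ⟨Γ₂, m₂, hw₂⟩ := h₂
  refine ⟨fun F => Γ₂ (Γ₁ F), fun F => m₁ F || m₂ (Γ₁ F), ?_⟩
  intro μ hμ hls
  obtain ⟨ha₁, hb₁⟩ := hw₁ μ hμ hls
  set c : ℝ := 1 - prob μ (fun F => m₁ F = false) with hc
  have hc0 : 0 ≤ c := by
    have := prob_le_one hμ (fun F => m₁ F = false)
    linarith
  set ν : Finset ι' → ℝ := fun G =>
    (∑ F : Finset ι, if m₁ F = false ∧ Γ₁ F = G then μ F else 0)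
      + (if G = (∅ : Finset ι') then c else 0) with hνdef
  have key : ∀ E : Finset ι' → Prop,
      prob ν E = prob μ (fun F => m₁ F = false ∧ E (Γ₁ F))
        + (if E (∅ : Finset ι') then c else 0) := by
    intro E
    have h1 : prob ν E
        = (∑ G : Finset ι', ∑ F : Finset ι,
            if E G ∧ m₁ F = false ∧ Γ₁ F = G then μ F else 0)
          + (∑ G : Finset ι', if E G ∧ G = (∅ : Finset ι') then c else 0) := by
      unfold prob
      rw [← Finset.sum_add_distrib]
      refine Finset.sum_congr rfl fun G _ => ?_
      simp only [hνdef]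
      by_cases hE : E G
      · simp only [hE, if_true, true_and]
      · simp only [hE, if_false, false_and, Finset.sum_const_zero, add_zero]
    rw [h1]
    congr 1
    · rw [Finset.sum_comm]
      refine Finset.sum_congr rfl fun F _ => ?_
      rw [Finset.sum_eq_single (Γ₁ F)]
      · split_ifs with h2 h3 h4
        · rfl
        · exact absurd ⟨h2.2.1, h2.1⟩ h3
        · exact absurd ⟨h4.2, h4.1, rfl⟩ h2
        · rfl
      · intro G _ hG
        rw [if_neg]
        intro h2
        exact hG h2.2.2.symm
      · intro h; exact absurd (Finset.mem_univ _) h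
    · rw [Finset.sum_eq_single (∅ : Finset ι')]
      · simp
      · intro G _ hG
        rw [if_neg]
        intro h2
        exact hG h2.2
      · intro h; exact absurd (Finset.mem_univ _) h
  have hν0 : ∀ G, 0 ≤ ν G := by
    intro G
    refine add_nonneg (Finset.sum_nonneg fun F _ => ?_) ?_
    · split_ifs <;> simp [hμ.1 F]
    · split_ifs <;> simp [hc0]
  have hνsum : ∑ G : Finset ι', ν G = 1 := by
    have h2 : ∑ G : Finset ι', ν G = prob ν (fun _ => True) := by
      unfold prob; simp
    have h3 : prob μ (fun F => m₁ F = false ∧ True) = prob μ (fun F => m₁ F = false) :=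
      prob_congr μ fun F => by simp
    rw [h2, key, if_pos trivial, h3, hc]
    ring
  have hνpmf : IsPMF ν := ⟨hν0, hνsum⟩
  have hνls : LocalStochastic q ν := by
    intro A'
    by_cases hA : A' = (∅ : Finset ι')
    · subst hA
      have h2 : prob ν (fun G => (∅ : Finset ι') ⊆ G) = ∑ G : Finset ι', ν G := by
        unfold prob; simp
      rw [h2, hνsum]
      simp
    · rw [key (fun G => A' ⊆ G)]
      have h2 : ¬ (A' ⊆ (∅ : Finset ι')) := fun h => hA (Finset.subset_empty.mp h)
      rw [if_neg h2, add_zero]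
      exact hb₁ A'
  obtain ⟨ha₂, hb₂⟩ := hw₂ ν hνpmf hνls
  constructor
  · have h2 := key (fun G => m₂ G = false)
    have h3 : prob ν (fun G => m₂ G = false)
        ≤ prob μ (fun F => m₁ F = false ∧ m₂ (Γ₁ F) = false) + c := by
      rw [h2]
      gcongr
      split_ifs <;> simp [hc0]
    have h4 : prob μ (fun F => (m₁ F || m₂ (Γ₁ F)) = false)
        = prob μ (fun F => m₁ F = false ∧ m₂ (Γ₁ F) = false) :=
      prob_congr μ fun F => by simp
    rw [h4]
    have h5 : c ≤ δ := by simp only [hc]; linarith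
    linarith
  · intro A''
    have h2 := key (fun G => m₂ G = false ∧ A'' ⊆ Γ₂ G)
    have h3 : prob μ (fun F => (m₁ F || m₂ (Γ₁ F)) = false ∧ A'' ⊆ Γ₂ (Γ₁ F))
        = prob μ (fun F => m₁ F = false ∧ m₂ (Γ₁ F) = false ∧ A'' ⊆ Γ₂ (Γ₁ F)) :=
      prob_congr μ fun F => by simp; tauto
    rw [h3]
    have h4 : prob μ (fun F => m₁ F = false ∧ m₂ (Γ₁ F) = false ∧ A'' ⊆ Γ₂ (Γ₁ F))
        ≤ prob ν (fun G => m₂ G = false ∧ A'' ⊆ Γ₂ G) := by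
      rw [h2]
      refine le_add_of_nonneg_right ?_
      split_ifs <;> simp [hc0]
    exact le_trans h4 (hb₂ A'')
end

section
/- Let Λ₁, Λ₂ be disjoint finite sets, p₁ ∈ [0,1], p₂ ∈ (0,1], and let F ⊆ Λ₁ ∪ Λ₂ be a random subset satisfying ℙ[F ⊇ A₁ ∪ A₂] ≤ p₁^{|A₁|} p₂^{|A₂|} for all A₁ ⊆ Λ₁, A₂ ⊆ Λ₂. Then for every integer k₀ ≥ 0, ℙ[ |F| ≥ k₀ and |F ∩ Λ₁| ≤ k₀ ] ≤ 2^{|Λ₂|} p₂^{k₀} (1 + p₁/p₂)^{|Λ₁|}. -/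
open scoped Classical

/-- Two-parameter tail bound: for disjoint `Λ₁, Λ₂` and a random subset `F` with
`ℙ[F ⊇ A₁ ∪ A₂] ≤ p₁^{|A₁|} p₂^{|A₂|}` for all `A₁ ⊆ Λ₁, A₂ ⊆ Λ₂`, one has
`ℙ[|F| ≥ k₀ and |F ∩ Λ₁| ≤ k₀] ≤ 2^{|Λ₂|} p₂^{k₀} (1 + p₁/p₂)^{|Λ₁|}`. -/
theorem prob_card_ge_two_params {ι : Type*} [Fintype ι]
    (Λ₁ Λ₂ : Finset ι) (hdisj : Disjoint Λ₁ Λ₂) (hunion : Λ₁ ∪ Λ₂ = Finset.univ)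
    (μ : Finset ι → ℝ) (hμ : IsPMF μ)
    (p₁ p₂ : ℝ) (hp₁0 : 0 ≤ p₁) (hp₁1 : p₁ ≤ 1) (hp₂0 : 0 < p₂) (hp₂1 : p₂ ≤ 1)
    (hls : ∀ A₁ ⊆ Λ₁, ∀ A₂ ⊆ Λ₂,
      prob μ (fun F => A₁ ∪ A₂ ⊆ F) ≤ p₁ ^ A₁.card * p₂ ^ A₂.card)
    (k₀ : ℕ) :
    prob μ (fun F => k₀ ≤ F.card ∧ (F ∩ Λ₁).card ≤ k₀)
      ≤ 2 ^ Λ₂.card * p₂ ^ k₀ * (1 + p₁ / p₂) ^ Λ₁.card := by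
  classical
  set S : Finset (Finset ι × Finset ι) :=
    (Λ₁.powerset ×ˢ Λ₂.powerset).filter
      (fun A => A.1.card ≤ k₀ ∧ A.2.card = k₀ - A.1.card) with hS
  -- covering property
  have hcover : ∀ F : Finset ι, (k₀ ≤ F.card ∧ (F ∩ Λ₁).card ≤ k₀) →
      ∃ A ∈ S, A.1 ∪ A.2 ⊆ F := by
    rintro F ⟨h1, h2⟩
    have hFsplit : F = (F ∩ Λ₁) ∪ (F ∩ Λ₂) := by
      rw [← Finset.inter_union_distrib_left, hunion, Finset.inter_univ]
    have hd : Disjoint (F ∩ Λ₁) (F ∩ Λ₂) :=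
      (hdisj.mono (Finset.inter_subset_right) (Finset.inter_subset_right))
    have hcard : F.card = (F ∩ Λ₁).card + (F ∩ Λ₂).card := by
      conv_lhs => rw [hFsplit]
      exact Finset.card_union_of_disjoint hd
    have hle : k₀ - (F ∩ Λ₁).card ≤ (F ∩ Λ₂).card := by omega
    obtain ⟨A₂, hA₂sub, hA₂card⟩ := Finset.exists_subset_card_eq hle
    refine ⟨(F ∩ Λ₁, A₂), ?_, ?_⟩
    · simp only [hS, Finset.mem_filter, Finset.mem_product, Finset.mem_powerset]
      exact ⟨⟨Finset.inter_subset_right, hA₂sub.trans Finset.inter_subset_right⟩, h2, hA₂card⟩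
    · exact Finset.union_subset Finset.inter_subset_left
        (hA₂sub.trans Finset.inter_subset_left)
  -- union bound
  have hub : prob μ (fun F => k₀ ≤ F.card ∧ (F ∩ Λ₁).card ≤ k₀)
      ≤ ∑ A ∈ S, prob μ (fun F => A.1 ∪ A.2 ⊆ F) := by
    unfold prob
    rw [Finset.sum_comm]
    apply Finset.sum_le_sum
    intro F _
    split_ifs with h
    · obtain ⟨A, hA, hsub⟩ := hcover F h
      have h0 : ∀ a : Finset ι × Finset ι, a ∈ S →
          (0:ℝ) ≤ if a.1 ∪ a.2 ⊆ F then μ F else 0 := by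
        intro a _
        split_ifs
        exacts [hμ.1 F, le_refl 0]
      have key := Finset.single_le_sum h0 hA
      calc μ F ≤ ∑ A ∈ S, if A.1 ∪ A.2 ⊆ F then μ F else 0 := by
            simpa [if_pos hsub] using key
        _ = _ := Finset.sum_congr rfl fun x _ => by split_ifs <;> rfl
    · exact Finset.sum_nonneg fun a _ => by
        by_cases hc : a.1 ∪ a.2 ⊆ F <;> simp [hc, hμ.1 F]
  have hterm : ∀ A ∈ S, prob μ (fun F => A.1 ∪ A.2 ⊆ F) ≤ p₂ ^ k₀ * (p₁ / p₂) ^ A.1.card := by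
    intro A hA
    simp only [hS, Finset.mem_filter, Finset.mem_product, Finset.mem_powerset] at hA
    obtain ⟨⟨hs1, hs2⟩, hc1, hc2⟩ := hA
    refine (hls A.1 hs1 A.2 hs2).trans ?_
    rw [hc2, div_pow]
    apply le_of_eq
    have hk : p₂ ^ k₀ = p₂ ^ (k₀ - A.1.card) * p₂ ^ A.1.card := by
      rw [← pow_add]; congr 1; omega
    rw [hk]
    field_simp
  calc prob μ (fun F => k₀ ≤ F.card ∧ (F ∩ Λ₁).card ≤ k₀)
      ≤ ∑ A ∈ S, prob μ (fun F => A.1 ∪ A.2 ⊆ F) := hub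
    _ ≤ ∑ A ∈ S, p₂ ^ k₀ * (p₁ / p₂) ^ A.1.card := Finset.sum_le_sum hterm
    _ ≤ ∑ A ∈ Λ₁.powerset ×ˢ Λ₂.powerset, p₂ ^ k₀ * (p₁ / p₂) ^ A.1.card := by
        apply Finset.sum_le_sum_of_subset_of_nonneg (Finset.filter_subset _ _)
        intro A _ _
        positivity
    _ = 2 ^ Λ₂.card * p₂ ^ k₀ * (1 + p₁ / p₂) ^ Λ₁.card := by
        rw [Finset.sum_product_right]
        simp only [Finset.sum_const, nsmul_eq_mul, Finset.card_powerset]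
        rw [← Finset.mul_sum]
        have hbin : ∑ A₁ ∈ Λ₁.powerset, (p₁ / p₂) ^ A₁.card = (1 + p₁ / p₂) ^ Λ₁.card := by
          have h := Finset.prod_add (fun _ : ι => p₁ / p₂) (fun _ : ι => (1:ℝ)) Λ₁
          simp only [Finset.prod_const, Finset.prod_const_one, one_pow, mul_one] at h
          rw [← h, add_comm]
        rw [hbin]
        push_cast
        ring
end
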